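/- Define words t_n over the alphabet {N, N+1} by t₀ = (N+1)NN and t_{n+1} = t_n⁺ φ₁(t_n⁺), where t_n⁺ denotes t_n with its last letter increased by 1, and φ₁ is the involution on length-3 blocks swapping (N+1)N(N+1) ↔ NNN and (N+1)NN ↔ NN(N+1) applied blockwise. Then for every n ≥ 0, the word t_n⁺ equals λ₁λ₂⋯λ_{3·2ⁿ}, where λ_{3k+1}=τ_{2k+1}+N, λ_{3k+2}=N, λ_{3k+3}=τ_{2k+2}+N. -/

import Mathlib

/-- Flip a letter between N and N+1. -/
def flipLetter (N x : ℕ) : ℕ := if x = N then N + 1 else N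

/-- The blockwise involution φ₁: on each length-3 block it flips the first and
third letters between N and N+1 and keeps the middle letter; this realizes the
swaps (N+1)N(N+1) ↔ NNN and (N+1)NN ↔ NN(N+1). -/
def phi1 (N : ℕ) : List ℕ → List ℕ
  | a :: b :: c :: rest => flipLetter N a :: b :: flipLetter N c :: phi1 N rest
  | l => l

/-- Increase the last letter of a word by 1. -/
def plusWord : List ℕ → List ℕ
  | [] => []
  | [a] => [a + 1]
  | a :: b :: rest => a :: plusWord (b :: rest)

/-- The words t_n: t₀ = (N+1)NN, t_{n+1} = t_n⁺ φ₁(t_n⁺). -/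
def tword (N : ℕ) : ℕ → List ℕ
  | 0 => [N + 1, N, N]
  | n + 1 => plusWord (tword N n) ++ phi1 N (plusWord (tword N n))

/-
Both `t_n⁺` and `λ₁ ⋯ λ_{3·2ⁿ}` are read block by block: the λ-block at index `2ⁿ + k` is
the φ₁-image of the block at index `k`, because `τ(2^{n+1} + m) = 1 - τ(m)` for `m < 2^{n+1}`
and φ₁ flips exactly the letters carrying τ. The one exception is the last letter of the
second half, where `τ(2^{n+2}) = τ(2^{n+1}) = 1`; this is what the `⁺` corrects. So
`λ₁ ⋯ λ_{3·2^{n+1}}` is `λ₁ ⋯ λ_{3·2ⁿ}` followed by `(φ₁(λ₁ ⋯ λ_{3·2ⁿ}))⁺`, which is the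
recursion defining `t_{n+1}⁺`.
-/

lemma List.ofFn_three_mul_eq_flatMap {α : Type*} (g : ℕ → α) (m : ℕ) :
    List.ofFn (fun t : Fin (3 * m) => g t) =
      (List.range m).flatMap fun k => [g (3 * k), g (3 * k + 1), g (3 * k + 2)] := by
  induction m with
  | zero => rfl
  | succ m ih =>
    rw [List.ofFn_congr (show 3 * (m + 1) = 3 * m + 3 by ring), List.ofFn_add]
    simp [ih, List.range_succ, List.ofFn_succ]

lemma plusWord_append (l₁ : List ℕ) {l₂ : List ℕ} (h : l₂ ≠ []) :
    plusWord (l₁ ++ l₂) = l₁ ++ plusWord l₂ := by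
  induction l₁ with
  | nil => rfl
  | cons a l₁ ih =>
    obtain ⟨b, l, hl⟩ := List.exists_cons_of_ne_nil (List.append_ne_nil_of_right_ne_nil l₁ h)
    rw [List.cons_append, hl, plusWord, ← hl, ih, List.cons_append]

lemma phi1_append (N : ℕ) {l₁ : List ℕ} (h : 3 ∣ l₁.length) (l₂ : List ℕ) :
    phi1 N (l₁ ++ l₂) = phi1 N l₁ ++ phi1 N l₂ := by
  induction l₁ using phi1.induct with
  | case1 a b c l ih =>
    simp only [List.cons_append, phi1, ih (by simpa using h)]
  | case2 l hl =>
    match l, hl, h with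
    | [], _, _ => rfl
    | [_], _, h | [_, _], _, h => simp at h
    | a :: b :: c :: l, hl, _ => exact absurd rfl (hl a b c l)

lemma phi1_flatMap (N : ℕ) {α : Type*} (f : α → List ℕ) (hf : ∀ a, (f a).length = 3) (l : List α) :
    phi1 N (l.flatMap f) = l.flatMap (phi1 N ∘ f) := by
  induction l with
  | nil => rfl
  | cons a l ih => rw [List.flatMap_cons, phi1_append N (by rw [hf a]), ih, List.flatMap_cons]; rfl

section ThueMorse

variable {τ : ℕ → ℕ}

lemma thueMorse_le_one (hτ0 : τ 0 = 0) (hτe : ∀ i, τ (2 * i) = τ i)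
    (hτo : ∀ i, τ (2 * i + 1) = 1 - τ i) (m : ℕ) : τ m ≤ 1 := by
  induction m using Nat.strong_induction_on with
  | _ m ih =>
    obtain ⟨i, rfl | rfl⟩ := Nat.even_or_odd' m
    · rcases Nat.eq_zero_or_pos i with rfl | hi
      · simp [hτ0]
      · rw [hτe]; exact ih i (by omega)
    · rw [hτo]; omega

lemma thueMorse_two_pow_add (hτe : ∀ i, τ (2 * i) = τ i) (hτo : ∀ i, τ (2 * i + 1) = 1 - τ i)
    {j m : ℕ} (hm : m < 2 ^ j) : τ (2 ^ j + m) = 1 - τ m := by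
  induction j generalizing m with
  | zero =>
    obtain rfl : m = 0 := by simpa using hm
    exact hτo 0
  | succ j ih =>
    obtain ⟨i, rfl | rfl⟩ := Nat.even_or_odd' m
    · rw [pow_succ, mul_comm, ← mul_add, hτe, hτe, ih (by omega)]
    · rw [pow_succ, mul_comm, ← add_assoc, ← mul_add, hτo, hτo, ih (by omega)]

lemma thueMorse_two_pow_succ (hτ0 : τ 0 = 0) (hτe : ∀ i, τ (2 * i) = τ i)
    (hτo : ∀ i, τ (2 * i + 1) = 1 - τ i) (j : ℕ) : τ (2 ^ (j + 1)) = 1 := by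
  induction j with
  | zero => simpa [hτ0, ← hτe 1] using hτo 0
  | succ j ih => rwa [pow_succ, mul_comm, hτe]

end ThueMorse

lemma flipLetter_add_of_le_one (N : ℕ) {t : ℕ} (ht : t ≤ 1) :
    flipLetter N (t + N) = (1 - t) + N := by
  interval_cases t <;> simp [flipLetter, add_comm]

/-- The letters `λ_{3k+1} λ_{3k+2} λ_{3k+3}`. -/
def lambdaBlock (N : ℕ) (τ : ℕ → ℕ) (k : ℕ) : List ℕ :=
  [τ (2 * k + 1) + N, N, τ (2 * k + 2) + N]

/-- The word `λ₁ ⋯ λ_{3m}`. -/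
def lambdaWord (N : ℕ) (τ : ℕ → ℕ) (m : ℕ) : List ℕ :=
  (List.range m).flatMap (lambdaBlock N τ)

lemma lambdaWord_add (N : ℕ) (τ : ℕ → ℕ) (a b : ℕ) :
    lambdaWord N τ (a + b) =
      lambdaWord N τ a ++ (List.range b).flatMap fun k => lambdaBlock N τ (a + k) := by
  rw [lambdaWord, List.range_add, List.flatMap_append, List.flatMap_map, lambdaWord]

section Blocks

variable {N : ℕ} {τ : ℕ → ℕ} (hτ0 : τ 0 = 0) (hτe : ∀ i, τ (2 * i) = τ i)
  (hτo : ∀ i, τ (2 * i + 1) = 1 - τ i)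
include hτ0 hτe hτo

lemma flipLetter_thueMorse {j m : ℕ} (hm : m < 2 ^ j) :
    flipLetter N (τ m + N) = τ (2 ^ j + m) + N := by
  rw [flipLetter_add_of_le_one N (thueMorse_le_one hτ0 hτe hτo m),
    thueMorse_two_pow_add hτe hτo hm]

lemma phi1_lambdaBlock {n k : ℕ} (hk : k + 1 < 2 ^ n) :
    phi1 N (lambdaBlock N τ k) = lambdaBlock N τ (2 ^ n + k) := by
  have h2n : 2 * (2 ^ n + k) = 2 ^ (n + 1) + 2 * k := by ring
  simp only [lambdaBlock, phi1, h2n, add_assoc]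
  rw [flipLetter_thueMorse hτ0 hτe hτo (j := n + 1) (by rw [pow_succ]; omega),
    flipLetter_thueMorse hτ0 hτe hτo (j := n + 1) (by rw [pow_succ]; omega)]

/-- At the last block the flipped third letter `N` is raised back to `N + 1 = λ_{3·2^{n+1}}`,
since `τ` is `1` at every power of two `≥ 2`. -/
lemma plusWord_phi1_lambdaBlock {n k : ℕ} (hk : k + 1 = 2 ^ n) :
    plusWord (phi1 N (lambdaBlock N τ k)) = lambdaBlock N τ (2 ^ n + k) := by
  have h2n : 2 * (2 ^ n + k) = 2 ^ (n + 1) + 2 * k := by ring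
  have hlast : 2 * k + 2 = 2 ^ (n + 1) := by rw [pow_succ]; omega
  have hlast' : 2 * (2 ^ n + k) + 2 = 2 ^ (n + 2) := by rw [pow_succ _ (n + 1)]; omega
  simp only [lambdaBlock, phi1, hlast, hlast', plusWord]
  rw [h2n, add_assoc, flipLetter_thueMorse hτ0 hτe hτo (j := n + 1) (by omega),
    thueMorse_two_pow_succ hτ0 hτe hτo, thueMorse_two_pow_succ hτ0 hτe hτo]
  simp [flipLetter, add_comm]

lemma plusWord_phi1_lambdaWord (n : ℕ) :
    plusWord (phi1 N (lambdaWord N τ (2 ^ n))) =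
      (List.range (2 ^ n)).flatMap fun k => lambdaBlock N τ (2 ^ n + k) := by
  obtain ⟨p, hp⟩ : ∃ p, 2 ^ n = p + 1 := ⟨2 ^ n - 1, by have := n.one_le_two_pow; omega⟩
  have hlen : ∀ k, (lambdaBlock N τ k).length = 3 := fun _ => rfl
  rw [lambdaWord, phi1_flatMap N _ hlen, hp, List.range_succ, List.flatMap_append,
    List.flatMap_append, List.flatMap_singleton, List.flatMap_singleton,
    plusWord_append _ (by simp [lambdaBlock, phi1]), Function.comp_apply, ← hp,
    plusWord_phi1_lambdaBlock hτ0 hτe hτo hp.symm]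
  congr 1
  refine List.flatMap_congr fun k hk => ?_
  exact phi1_lambdaBlock hτ0 hτe hτo (by rw [List.mem_range] at hk; omega)

lemma plusWord_tword (n : ℕ) : plusWord (tword N n) = lambdaWord N τ (2 ^ n) := by
  induction n with
  | zero =>
    have hτ1 : τ 1 = 1 := by simpa [hτ0] using hτo 0
    have hτ2 : τ 2 = 1 := by simpa [hτ0] using thueMorse_two_pow_succ hτ0 hτe hτo 0
    simp [tword, plusWord, lambdaWord, lambdaBlock, hτ1, hτ2, add_comm]
  | succ n ih =>
    have hne : phi1 N (lambdaWord N τ (2 ^ n)) ≠ [] := by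
      rw [lambdaWord, phi1_flatMap N _ fun _ => rfl]
      simpa [lambdaBlock, phi1] using ⟨0, Nat.two_pow_pos n⟩
    rw [tword, ih, plusWord_append _ hne, plusWord_phi1_lambdaWord hτ0 hτe hτo, pow_succ,
      mul_two, lambdaWord_add]

end Blocks

/-- t_n⁺ = λ₁⋯λ_{3·2ⁿ}. -/
theorem tword_plus_eq_lambda_prefix (N : ℕ) (τ : ℕ → ℕ)
    (hτ0 : τ 0 = 0) (hτe : ∀ i, τ (2 * i) = τ i) (hτo : ∀ i, τ (2 * i + 1) = 1 - τ i)
    (lam : ℕ → ℕ)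
    (h1 : ∀ k, lam (3 * k + 1) = τ (2 * k + 1) + N)
    (h2 : ∀ k, lam (3 * k + 2) = N)
    (h3 : ∀ k, lam (3 * k + 3) = τ (2 * k + 2) + N)
    (n : ℕ) :
    plusWord (tword N n) = List.ofFn (fun t : Fin (3 * 2 ^ n) => lam ((t : ℕ) + 1)) := by
  rw [plusWord_tword hτ0 hτe hτo, List.ofFn_three_mul_eq_flatMap (fun i => lam (i + 1)),
    lambdaWord]
  exact List.flatMap_congr fun k _ => by simp only [lambdaBlock, h1, h2, h3]
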